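/- arXiv:math/0504337 — 6 statements merged into one kernel-verified Lean document; each statement's English description precedes it below -/
import Mathlib

section
/- Let (g,[,]) be a finite-dimensional Lie algebra over a field K and let N : g → g be a Nijenhuis operator, i.e. [Nx,Ny] - N([Nx,y]+[x,Ny]) + N²[x,y] = 0 for all x,y. Then for every λ ∈ K not in the spectrum of N and all x,y ∈ g one has (N-λId)⁻¹[(N-λId)x,(N-λId)y] = [x,y]_N - λ[x,y], where [x,y]_N := [Nx,y]+[x,Ny]-N[x,y]. -/
/-- For a Nijenhuis operator `N` on a finite-dimensional Lie algebra and any scalar `λ`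
outside the spectrum of `N`, one has
`(N - λ·Id)⁻¹ ⁅(N - λ·Id) x, (N - λ·Id) y⁆ = [x,y]_N - λ • ⁅x,y⁆`. -/
theorem stmt0 (K : Type*) [Field K] (g : Type*) [LieRing g] [LieAlgebra K g]
    [FiniteDimensional K g] (N : g →ₗ[K] g)
    (hN : ∀ x y : g, ⁅N x, N y⁆ - N (⁅N x, y⁆ + ⁅x, N y⁆) + N (N ⁅x, y⁆) = 0)
    (lam : K) (hlam : lam ∉ spectrum K (N : Module.End K g)) (x y : g) :
    Ring.inverse ((N : Module.End K g) - algebraMap K (Module.End K g) lam)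
        ⁅N x - lam • x, N y - lam • y⁆
      = (⁅N x, y⁆ + ⁅x, N y⁆ - N ⁅x, y⁆) - lam • ⁅x, y⁆ := by
  have hu : IsUnit ((N : Module.End K g) - algebraMap K (Module.End K g) lam) := by
    rw [spectrum.notMem_iff] at hlam
    simpa [sub_eq_neg_add] using hlam.neg
  set M := (N : Module.End K g) - algebraMap K (Module.End K g) lam with hM
  set w := (⁅N x, y⁆ + ⁅x, N y⁆ - N ⁅x, y⁆) - lam • ⁅x, y⁆ with hw
  have key : M w = ⁅N x - lam • x, N y - lam • y⁆ := by
    have h := hN x y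
    simp only [hM, hw, LinearMap.sub_apply, Module.algebraMap_end_apply,
      map_add, map_sub, map_smul, lie_sub, sub_lie, lie_smul, smul_lie,
      smul_sub, smul_add, smul_smul] at h ⊢
    linear_combination (norm := module) -h
  have h1 : Ring.inverse M * M = 1 := Ring.inverse_mul_cancel _ hu
  have h2 : Ring.inverse M (M w) = w := by
    calc Ring.inverse M (M w) = (Ring.inverse M * M) w := rfl
      _ = w := by rw [h1]; rfl
  rw [key] at h2
  exact h2
end

section
/- Let g = g₁ ⊕ ⋯ ⊕ gₙ be a direct sum decomposition of a Lie algebra into subspaces such that gᵢ + gⱼ is a Lie subalgebra for every pair i,j. For arbitrary pairwise distinct scalars λ₁,…,λₙ, the operator N defined by N|_{gᵢ} = λᵢ Id is a Nijenhuis operator. -/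
/-!
The Nijenhuis torsion of `N` is bilinear, so it suffices to check that it vanishes on
`x ∈ gᵢ`, `y ∈ gⱼ`. Writing `⁅x, y⁆ = u + v` with `u ∈ gᵢ`, `v ∈ gⱼ`, the torsion becomes
`λᵢλⱼ (u + v) - (λᵢ + λⱼ)(λᵢ u + λⱼ v) + (λᵢ² u + λⱼ² v) = 0`.
-/

namespace LieAlgebra

variable {R L : Type*} [CommRing R] [LieRing L] [LieAlgebra R L]

def nijenhuisTorsion (N : L →ₗ[R] L) : L →ₗ[R] L →ₗ[R] L :=
  LinearMap.mk₂ R (fun x y => ⁅N x, N y⁆ - N (⁅N x, y⁆ + ⁅x, N y⁆) + N (N ⁅x, y⁆))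
    (fun x x' y => by simp only [map_add, add_lie]; abel)
    (fun c x y => by simp only [map_add, map_smul, smul_lie, smul_add, smul_sub])
    (fun x y y' => by simp only [map_add, lie_add]; abel)
    (fun c x y => by simp only [map_add, map_smul, lie_smul, smul_add, smul_sub])

theorem nijenhuisTorsion_apply (N : L →ₗ[R] L) (x y : L) :
    nijenhuisTorsion N x y = ⁅N x, N y⁆ - N (⁅N x, y⁆ + ⁅x, N y⁆) + N (N ⁅x, y⁆) :=
  rfl

theorem nijenhuisTorsion_eq_zero_of_eigenvectors {N : L →ₗ[R] L} {a b : R} {x y u v : L}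
    (hx : N x = a • x) (hy : N y = b • y) (hxy : ⁅x, y⁆ = u + v)
    (hu : N u = a • u) (hv : N v = b • v) :
    nijenhuisTorsion N x y = 0 := by
  simp only [nijenhuisTorsion_apply, hx, hy, lie_smul, smul_lie, hxy, map_add, map_smul, hu, hv]
  module

theorem nijenhuisTorsion_eq_zero_of_iSup_eq_top {ι : Type*} {V : ι → Submodule R L}
    (hV : ⨆ i, V i = ⊤) {N : L →ₗ[R] L}
    (h : ∀ i j, ∀ x ∈ V i, ∀ y ∈ V j, nijenhuisTorsion N x y = 0) :
    nijenhuisTorsion N = 0 := by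
  have hspan : Submodule.span R (⋃ i, (V i : Set L)) = ⊤ := by
    rwa [← Submodule.iSup_eq_span]
  refine LinearMap.ext_on hspan fun x hx => LinearMap.ext_on hspan fun y hy => ?_
  obtain ⟨i, hxi⟩ := Set.mem_iUnion.mp hx
  obtain ⟨j, hyj⟩ := Set.mem_iUnion.mp hy
  exact h i j x hxi y hyj

end LieAlgebra

theorem stmt7_general (g : Type*) [LieRing g] [LieAlgebra ℂ g]
    (n : ℕ) (V : Fin n → Submodule ℂ g)
    (hV : DirectSum.IsInternal V)
    (hsub : ∀ i j : Fin n, ∀ x ∈ V i, ∀ y ∈ V j, ⁅x, y⁆ ∈ V i ⊔ V j)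
    (lam : Fin n → ℂ)
    (N : g →ₗ[ℂ] g) (hNdef : ∀ i : Fin n, ∀ x ∈ V i, N x = lam i • x) :
    ∀ x y : g, ⁅N x, N y⁆ - N (⁅N x, y⁆ + ⁅x, N y⁆) + N (N ⁅x, y⁆) = 0 := by
  have htorsion : LieAlgebra.nijenhuisTorsion N = 0 := by
    refine LieAlgebra.nijenhuisTorsion_eq_zero_of_iSup_eq_top hV.submodule_iSup_eq_top
      fun i j x hx y hy => ?_
    obtain ⟨u, hu, v, hv, huv⟩ := Submodule.mem_sup.mp (hsub i j x hx y hy)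
    exact LieAlgebra.nijenhuisTorsion_eq_zero_of_eigenvectors (hNdef i x hx) (hNdef j y hy)
      huv.symm (hNdef i u hu) (hNdef j v hv)
  intro x y
  simpa only [LieAlgebra.nijenhuisTorsion_apply, LinearMap.zero_apply] using
    LinearMap.congr_fun₂ htorsion x y

/-- If `g = g₁ ⊕ ⋯ ⊕ gₙ` is a direct sum of subspaces such that `gᵢ + gⱼ` is a Lie
subalgebra for all `i,j`, then the operator acting as `λᵢ·Id` on `gᵢ` (with pairwise
distinct eigenvalues) is Nijenhuis. -/
theorem stmt7 (g : Type*) [LieRing g] [LieAlgebra ℂ g] [FiniteDimensional ℂ g]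
    (n : ℕ) (V : Fin n → Submodule ℂ g)
    (hV : DirectSum.IsInternal V)
    (hsub : ∀ i j : Fin n, ∀ x ∈ V i, ∀ y ∈ V j, ⁅x, y⁆ ∈ V i ⊔ V j)
    (lam : Fin n → ℂ) (hlam : Function.Injective lam)
    (N : g →ₗ[ℂ] g) (hNdef : ∀ i : Fin n, ∀ x ∈ V i, N x = lam i • x) :
    ∀ x y : g, ⁅N x, N y⁆ - N (⁅N x, y⁆ + ⁅x, N y⁆) + N (N ⁅x, y⁆) = 0 :=
  stmt7_general g n V hV hsub lam N hNdef
end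

section
/- Fix a matrix I ∈ gl_n and an anti-involution * on gl_n (i.e. (AB)* = B*A*). Set g_I := {B ∈ gl_n : BI + IB* = 0} and h_I := {A ∈ gl_n : AI - IA* = 0}. Then g_I is a Lie subalgebra of gl_n, and for every A ∈ h_I and B,C ∈ g_I, the element BAC - CAB lies in g_I; in particular [B,C]_A := BAC - CAB defines a bracket on g_I satisfying the Jacobi identity. -/
/-- Fix `I ∈ gl_n` and an anti-involution `*`. Then
`g_I = {B : B I + I B* = 0}` is a Lie subalgebra of `gl_n`; for `A ∈ h_I` and
`B, C ∈ g_I` the element `BAC - CAB` again lies in `g_I`; and the bracket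
`[B,C]_A := BAC - CAB` satisfies the Jacobi identity on `g_I`. -/
theorem stmt12 (K : Type*) [Field K] (n : ℕ)
    (star : Matrix (Fin n) (Fin n) K →ₗ[K] Matrix (Fin n) (Fin n) K)
    (hmul : ∀ X Y, star (X * Y) = star Y * star X)
    (hinvol : ∀ X, star (star X) = X)
    (I : Matrix (Fin n) (Fin n) K)
    (gI : Set (Matrix (Fin n) (Fin n) K))
    (hgI : gI = {B | B * I + I * star B = 0}) :
    (∀ B ∈ gI, ∀ C ∈ gI, B * C - C * B ∈ gI) ∧
    (∀ A : Matrix (Fin n) (Fin n) K, A * I - I * star A = 0 →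
      (∀ B ∈ gI, ∀ C ∈ gI, B * A * C - C * A * B ∈ gI) ∧
      (∀ B ∈ gI, ∀ C ∈ gI, ∀ D ∈ gI,
        (B * A * (C * A * D - D * A * C) - (C * A * D - D * A * C) * A * B)
        + (C * A * (D * A * B - B * A * D) - (D * A * B - B * A * D) * A * C)
        + (D * A * (B * A * C - C * A * B) - (B * A * C - C * A * B) * A * D) = 0)) := by
  subst hgI
  simp only [Set.mem_setOf_eq]
  have key : ∀ B, B * I + I * star B = 0 → B * I = -(I * star B) := fun B h =>
    eq_neg_of_add_eq_zero_left h
  constructor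
  · intro B hB C hC
    have hBI := key B hB
    have hCI := key C hC
    have : (B * C - C * B) * I = I * star B * star C - I * star C * star B := by
      calc (B * C - C * B) * I = B * (C * I) - C * (B * I) := by noncomm_ring
        _ = B * (-(I * star C)) - C * (-(I * star B)) := by rw [hBI, hCI]
        _ = C * I * star B - B * I * star C := by noncomm_ring
        _ = (-(I * star C)) * star B - (-(I * star B)) * star C := by rw [hBI, hCI]
        _ = I * star B * star C - I * star C * star B := by noncomm_ring
    rw [this, map_sub, hmul, hmul]
    noncomm_ring
  · intro A hA
    have hAI : A * I = I * star A := sub_eq_zero.mp hA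
    constructor
    · intro B hB C hC
      have hBI := key B hB
      have hCI := key C hC
      have : (B * A * C - C * A * B) * I
          = I * star B * star A * star C - I * star C * star A * star B := by
        calc (B * A * C - C * A * B) * I = B * A * (C * I) - C * A * (B * I) := by
              noncomm_ring
          _ = B * A * (-(I * star C)) - C * A * (-(I * star B)) := by rw [hBI, hCI]
          _ = C * (A * I) * star B - B * (A * I) * star C := by noncomm_ring
          _ = C * (I * star A) * star B - B * (I * star A) * star C := by rw [hAI]
          _ = (C * I) * star A * star B - (B * I) * star A * star C := by noncomm_ring
          _ = (-(I * star C)) * star A * star B - (-(I * star B)) * star A * star C := by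
              rw [hBI, hCI]
          _ = I * star B * star A * star C - I * star C * star A * star B := by
              noncomm_ring
      rw [this, map_sub, hmul, hmul, hmul, hmul]
      noncomm_ring
    · intro B _ C _ D _
      noncomm_ring
end

section
/- Let g be a Lie algebra with a diagonalizable Nijenhuis operator N having eigenvalue λᵢ, and suppose g = E₁ ⊕ E₂ with E₁ = im(N - λᵢId), E₂ = ker(N - λᵢId). Set M := N - λᵢId. Then the deformed bracket satisfies [x,y]_M = (M|_{E₁})⁻¹ P₁[Mx, My] + P₂[Mx, y] + P₂[x, My] for all x,y ∈ g, where P₁, P₂ are the projections onto E₁, E₂. -/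
/-- For `M = N - λᵢ·Id` with `N` Nijenhuis and `g = im M ⊕ ker M`, the deformed
bracket satisfies `[x,y]_M = (M|_{E₁})⁻¹ P₁⁅Mx,My⁆ + P₂⁅Mx,y⁆ + P₂⁅x,My⁆`. -/
theorem stmt15 (g : Type*) [LieRing g] [LieAlgebra ℂ g] [FiniteDimensional ℂ g]
    (N : g →ₗ[ℂ] g)
    (hN : ∀ x y : g, ⁅N x, N y⁆ - N (⁅N x, y⁆ + ⁅x, N y⁆) + N (N ⁅x, y⁆) = 0)
    (lami : ℂ) (M : g →ₗ[ℂ] g) (hM : M = N - lami • LinearMap.id)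
    (hcompl : IsCompl (LinearMap.range M) (LinearMap.ker M))
    (P₁ P₂ : g →ₗ[ℂ] g)
    (hsum : ∀ x, P₁ x + P₂ x = x)
    (hP₁ : ∀ x, P₁ x ∈ LinearMap.range M) (hP₂ : ∀ x, P₂ x ∈ LinearMap.ker M)
    (hP₁id : ∀ x ∈ LinearMap.range M, P₁ x = x)
    (hP₂id : ∀ x ∈ LinearMap.ker M, P₂ x = x)
    (Minv : g →ₗ[ℂ] g)
    (hMinv_range : ∀ x, Minv x ∈ LinearMap.range M)
    (hMinv : ∀ x ∈ LinearMap.range M, M (Minv x) = x)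
    (hMinv' : ∀ x ∈ LinearMap.range M, Minv (M x) = x) :
    ∀ x y : g,
      ⁅M x, y⁆ + ⁅x, M y⁆ - M ⁅x, y⁆
        = Minv (P₁ ⁅M x, M y⁆) + P₂ ⁅M x, y⁆ + P₂ ⁅x, M y⁆ := by
  intro x y
  have key : M (⁅M x, y⁆ + ⁅x, M y⁆ - M ⁅x, y⁆) = ⁅M x, M y⁆ := by
    have h := hN x y
    rw [hM]
    simp only [LinearMap.sub_apply, LinearMap.smul_apply, LinearMap.id_apply, map_sub,
      map_add, map_smul, sub_lie, lie_sub, smul_lie, lie_smul, smul_sub] at h ⊢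
    linear_combination (norm := module) -h
  set b : g := ⁅M x, y⁆ + ⁅x, M y⁆ - M ⁅x, y⁆ with hb
  have hP2M : ∀ z : g, P₂ (M z) = 0 := by
    intro z
    have h1 := hsum (M z)
    rwa [hP₁id _ ⟨z, rfl⟩, add_eq_left] at h1
  have hMPb : M (P₁ b) = M b := by
    conv_rhs => rw [← hsum b]
    rw [map_add, LinearMap.mem_ker.mp (hP₂ b), add_zero]
  calc b = P₁ b + P₂ b := (hsum b).symm
    _ = Minv (P₁ ⁅M x, M y⁆) + P₂ ⁅M x, y⁆ + P₂ ⁅x, M y⁆ := by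
        rw [← key, hP₁id _ ⟨b, rfl⟩, ← hMPb, hMinv' _ (hP₁ b)]
        simp only [hb, map_add, map_sub, hP2M, sub_zero, add_assoc]
end

section
/- Let ǧᵢ ⊂ gl_n(C) be the Lie subalgebra of matrices whose i-th row is zero. Then ǧᵢ is a Frobenius Lie algebra, i.e. its index is 0: there exists a linear functional ξ on ǧᵢ such that the skew form (x,y) ↦ ξ([x,y]) is nondegenerate on ǧᵢ. -/
/-!
Take `ξ z = ∑_{t ≠ i} z t (t - 1)`, indices mod `n`. Pairing `x ∈ ǧᵢ` with the elementary
matrices `E k l`, `k ≠ i` (which lie in `ǧᵢ`), gives `x l (k - 1) = x (l + 1) k` when `l + 1 ≠ i`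
and `x l (k - 1) = 0` when `l + 1 = i`. So `x` is constant along cyclic diagonals and vanishes on
row `i` and on row `i - 1` off column `i - 1`. In coordinates shifted by `i`, an entry on or above
the main diagonal slides down its diagonal to row `0`, and one below it slides up to the last row;
either way it is `0`.
-/

open Finset

namespace Matrix

section single

variable {α l m n : Type*} [NonUnitalNonAssocSemiring α] [Fintype m] [DecidableEq m] (c : α)

theorem mul_single_apply [DecidableEq n] (M : Matrix l m α) (i : m) (j : n) (a : l) (b : n) :
    (M * single i j c) a b = if b = j then M a i * c else 0 := by
  split_ifs with h
  · subst h; exact mul_single_apply_same c i b a M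
  · exact mul_single_apply_of_ne c i j a b h M

theorem single_mul_apply [DecidableEq l] (M : Matrix m n α) (i : l) (j : m) (a : l) (b : n) :
    (single i j c * M) a b = if a = i then c * M j b else 0 := by
  split_ifs with h
  · subst h; exact single_mul_apply_same c a j b M
  · exact single_mul_apply_of_ne c i j a b h M

end single

section Frobenius

variable {m : ℕ}

def cyclicSubdiagonalSumExcept {R : Type*} [Semiring R] (i : Fin (m + 1)) :
    Matrix (Fin (m + 1)) (Fin (m + 1)) R →ₗ[R] R where
  toFun z := ∑ t ∈ univ.erase i, z t (t - 1)
  map_add' z w := by simp only [add_apply, sum_add_distrib]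
  map_smul' c z := by simp only [smul_apply, smul_eq_mul, mul_sum, RingHom.id_apply]

theorem cyclicSubdiagonalSumExcept_commutator_single {R : Type*} [Ring R] (i : Fin (m + 1))
    (x : Matrix (Fin (m + 1)) (Fin (m + 1)) R) {k : Fin (m + 1)} (hk : k ≠ i) (l : Fin (m + 1)) :
    cyclicSubdiagonalSumExcept i (x * single k l 1 - single k l 1 * x) =
      (if l + 1 = i then 0 else x (l + 1) k) - x l (k - 1) := by
  simp only [cyclicSubdiagonalSumExcept, LinearMap.coe_mk, AddHom.coe_mk, sub_apply,
    sum_sub_distrib, mul_single_apply, single_mul_apply, mul_one, one_mul, sub_eq_iff_eq_add,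
    sum_ite_eq', mem_erase, mem_univ, and_true, hk, ne_eq, not_false_eq_true, if_true, ite_not]

variable {α : Type*} [Zero α]

theorem eq_zero_of_diagonal_shift {y : Matrix (Fin (m + 1)) (Fin (m + 1)) α}
    (hfirst : ∀ q, y 0 q = 0) (hlast : ∀ q : Fin m, y (Fin.last m) q.castSucc = 0)
    (hshift : ∀ p q : Fin m, y p.castSucc q.castSucc = y p.succ q.succ) : y = 0 := by
  have on_or_above : ∀ p q, p ≤ q → y p q = 0 := by
    intro p
    induction p using Fin.induction with
    | zero => exact fun q _ => hfirst q
    | succ p ih =>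
      intro q hpq
      obtain ⟨q, rfl⟩ := Fin.exists_succ_eq.mpr (Fin.succ_pos p |>.trans_le hpq).ne'
      rw [← hshift]
      exact ih _ (by simpa using hpq)
  have below : ∀ p q, q < p → y p q = 0 := by
    intro p
    induction p using Fin.reverseInduction with
    | last =>
      intro q hq
      obtain ⟨q, rfl⟩ := Fin.exists_castSucc_eq.mpr hq.ne
      exact hlast q
    | cast p ih =>
      intro q hq
      obtain ⟨q, rfl⟩ := Fin.exists_castSucc_eq.mpr (hq.trans (Fin.castSucc_lt_last p)).ne
      rw [hshift]
      exact ih _ (by simpa using hq)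
  ext p q
  exact (le_or_gt p q).elim (on_or_above p q) (below p q)

theorem eq_zero_of_row_eq_zero_of_cyclic_shift {x : Matrix (Fin (m + 1)) (Fin (m + 1)) α}
    {i : Fin (m + 1)} (hrow : ∀ j, x i j = 0)
    (hshift : ∀ l k, k ≠ i → (if l + 1 = i then 0 else x (l + 1) k) = x l (k - 1)) :
    x = 0 := by
  have hsucc (q : Fin m) : q.succ + i ≠ i := by simp [Fin.succ_ne_zero]
  have hpred (q : Fin m) : q.succ + i - 1 = q.castSucc + i := by
    rw [← Fin.coeSucc_eq_succ]; abel
  have hy : (of fun p q => x (p + i) (q + i)) = 0 := by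
    refine eq_zero_of_diagonal_shift (fun q => by simpa using hrow _) (fun q => ?_) (fun p q => ?_)
    · have h := hshift (Fin.last m + i) _ (hsucc q)
      rwa [add_right_comm, Fin.last_add_one, zero_add, if_pos rfl, hpred, eq_comm] at h
    · have h := hshift (p.castSucc + i) _ (hsucc q)
      rwa [add_right_comm, Fin.coeSucc_eq_succ, if_neg (hsucc p), hpred, eq_comm] at h
  ext a b
  simpa using congr_fun₂ hy (a - i) (b - i)

end Frobenius

end Matrix

open Matrix

/-- The Lie subalgebra of `gl_n(ℂ)` of matrices with zero `i`-th row is Frobenius: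
there is a linear functional `ξ` such that `(x,y) ↦ ξ⁅x,y⁆` is nondegenerate on it. -/
theorem stmt16 (n : ℕ) (i : Fin n) :
    ∃ ξ : Matrix (Fin n) (Fin n) ℂ →ₗ[ℂ] ℂ,
      ∀ x : Matrix (Fin n) (Fin n) ℂ, (∀ j, x i j = 0) →
        (∀ y : Matrix (Fin n) (Fin n) ℂ, (∀ j, y i j = 0) → ξ (x * y - y * x) = 0) →
        x = 0 := by
  obtain ⟨m, rfl⟩ : ∃ m, n = m + 1 := Nat.exists_eq_add_one.mpr i.pos
  refine ⟨cyclicSubdiagonalSumExcept i, fun x hx hxy => ?_⟩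
  refine eq_zero_of_row_eq_zero_of_cyclic_shift hx fun l k hk => sub_eq_zero.mp ?_
  rw [← cyclicSubdiagonalSumExcept_commutator_single i x hk l]
  exact hxy _ fun j => single_apply_of_row_ne hk l j 1
end

section
/- Let X ∈ gl_n(C) be the matrix diag(a₁,…,a_{i-1},0,a_{i+1},…,a_n) + L_i, where the aⱼ are pairwise distinct complex numbers different from 0 and 1, and L_i is the matrix whose i-th row has all entries equal to 1 and all other entries zero. Then the i-th row of X^k equals (Σ_{j=0}^{k-1} a₁^j, …, Σ_{j=0}^{k-1} a_{i-1}^j, 1, Σ_{j=0}^{k-1} a_{i+1}^j, …, Σ_{j=0}^{k-1} a_n^j), and the vectors w_k(X) formed by deleting the i-th entry of these rows, for k = 1,…,n-1, are linearly independent in C^{n-1}. -/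
/-- For `X = diag(a₁,…,0,…,aₙ) + L_i` with the `aⱼ` pairwise distinct, `a i = 0`,
and all other `aⱼ ∉ {0,1}`, the `i`-th row of `X^k` is
`(Σ_{t<k} a₁^t, …, 1, …, Σ_{t<k} aₙ^t)`, and the vectors obtained from these rows by
deleting the `i`-th entry, for `k = 1,…,n-1`, are linearly independent. -/
theorem stmt18 (n : ℕ) (i : Fin n) (a : Fin n → ℂ)
    (ha : Function.Injective a) (hai : a i = 0)
    (h0 : ∀ j, j ≠ i → a j ≠ 0) (h1 : ∀ j, a j ≠ 1)
    (X : Matrix (Fin n) (Fin n) ℂ)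
    (hX : X = Matrix.diagonal a + Matrix.of (fun r _ => if r = i then (1 : ℂ) else 0)) :
    (∀ k : ℕ, 1 ≤ k → ∀ j : Fin n,
        (X ^ k) i j = ∑ t ∈ Finset.range k, a j ^ t) ∧
    LinearIndependent ℂ
      (fun k : Fin (n - 1) => fun j : {j : Fin n // j ≠ i} =>
        (X ^ ((k : ℕ) + 1)) i (j : Fin n)) := by
  -- Part 1: the row formula.
  have key : ∀ k : ℕ, 1 ≤ k → ∀ j : Fin n,
      (X ^ k) i j = ∑ t ∈ Finset.range k, a j ^ t := by
    intro k hk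
    induction k with
    | zero => omega
    | succ k ih =>
      rcases Nat.eq_or_lt_of_le hk with hk1 | hk1
      · intro j
        have hk0 : k = 0 := by omega
        subst hk0
        simp only [pow_one, hX, Matrix.add_apply, Matrix.diagonal_apply,
          Matrix.of_apply, if_pos rfl, Finset.range_one, Finset.sum_singleton, pow_zero]
        by_cases h : i = j
        · subst h; simp [hai]
        · simp [h]
      · have hk' : 1 ≤ k := by omega
        intro j
        have hstep : (X ^ (k + 1)) i j = ∑ m, (X ^ k) i m * X m j := by
          rw [pow_succ, Matrix.mul_apply]
        rw [hstep]
        have hXE : ∀ m j' : Fin n, X m j' =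
            (if m = j' then a m else 0) + (if m = i then 1 else 0) := by
          intro m j'
          simp [hX, Matrix.add_apply, Matrix.diagonal_apply, Matrix.of_apply]
        have : ∑ m, (X ^ k) i m * X m j
            = ∑ m, ((X ^ k) i m * (if m = j then a m else 0)
              + (X ^ k) i m * (if m = i then 1 else 0)) := by
          apply Finset.sum_congr rfl
          intro m _
          rw [hXE m j, mul_add]
        rw [this, Finset.sum_add_distrib]
        have e1 : ∑ m, (X ^ k) i m * (if m = j then a m else 0)
            = (X ^ k) i j * a j := by
          rw [Finset.sum_eq_single j]
          · simp
          · intro m _ hm; simp [hm]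
          · intro h; exact absurd (Finset.mem_univ j) h
        have e2 : ∑ m, (X ^ k) i m * (if m = i then 1 else 0) = (X ^ k) i i := by
          rw [Finset.sum_eq_single i]
          · simp
          · intro m _ hm; simp [hm]
          · intro h; exact absurd (Finset.mem_univ i) h
        rw [e1, e2, ih hk', ih hk']
        have hii : ∑ t ∈ Finset.range k, a i ^ t = 1 := by
          rw [hai]
          obtain ⟨m, rfl⟩ := Nat.exists_eq_succ_of_ne_zero (by omega : k ≠ 0)
          rw [Finset.sum_range_succ']
          simp
        rw [hii, geom_sum_succ]
        ring
  refine ⟨key, ?_⟩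
  -- Part 2: linear independence.
  -- Set up an equivalence between `Fin (n-1)` and the complement of `i`.
  have hcard : Fintype.card {j : Fin n // j ≠ i} = n - 1 := by
    simp [Fintype.card_subtype_compl]
  let e : Fin (n - 1) ≃ {j : Fin n // j ≠ i} :=
    (Fintype.equivFinOfCardEq hcard).symm
  set b : Fin (n - 1) → ℂ := fun t => a (e t) with hb
  have hbinj : Function.Injective b := by
    intro s t hst
    exact e.injective (Subtype.ext (ha hst))
  -- The square matrices.
  let L : Matrix (Fin (n - 1)) (Fin (n - 1)) ℂ :=
    Matrix.of fun k t => if (t : ℕ) ≤ (k : ℕ) then (1 : ℂ) else 0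
  let V : Matrix (Fin (n - 1)) (Fin (n - 1)) ℂ := (Matrix.vandermonde b).transpose
  let M : Matrix (Fin (n - 1)) (Fin (n - 1)) ℂ :=
    Matrix.of fun k s => ∑ t ∈ Finset.range ((k : ℕ) + 1), b s ^ t
  have hM : M = L * V := by
    ext k s
    rw [Matrix.mul_apply]
    simp only [M, L, V, Matrix.of_apply, Matrix.transpose_apply, Matrix.vandermonde_apply,
      ite_mul, one_mul, zero_mul]
    rw [Fin.sum_univ_eq_sum_range (fun t => if t ≤ (k : ℕ) then b s ^ t else 0)]
    rw [← Finset.sum_subset (Finset.range_subset_range.mpr (by omega : (k : ℕ) + 1 ≤ n - 1))]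
    · apply Finset.sum_congr rfl
      intro t ht
      rw [Finset.mem_range] at ht
      rw [if_pos (by omega)]
    · intro t _ ht
      rw [Finset.mem_range] at ht
      rw [if_neg (by omega)]
  have hdetL : L.det = 1 := by
    have hLT : L.BlockTriangular OrderDual.toDual := by
      intro k t hkt
      simp only [L, Matrix.of_apply]
      rw [if_neg]
      exact fun h => absurd (Fin.le_def.mpr h) (not_le.mpr hkt)
    rw [Matrix.det_of_lowerTriangular L hLT]
    simp [L]
  have hdetV : V.det ≠ 0 := by
    rw [Matrix.det_transpose]
    exact Matrix.det_vandermonde_ne_zero_iff.mpr hbinj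
  have hMunit : IsUnit M := by
    rw [Matrix.isUnit_iff_isUnit_det, hM, Matrix.det_mul, hdetL, one_mul]
    exact hdetV.isUnit
  have hli : LinearIndependent ℂ (fun k => M k) :=
    Matrix.linearIndependent_rows_iff_isUnit.mpr hMunit
  -- Transport along the reindexing equiv.
  let φ : (Fin (n - 1) → ℂ) ≃ₗ[ℂ] ({j : Fin n // j ≠ i} → ℂ) :=
    LinearEquiv.funCongrLeft ℂ ℂ e.symm
  have hli2 : LinearIndependent ℂ (fun k => φ (M k)) := by
    exact hli.map' φ.toLinearMap φ.ker
  have heq : (fun k : Fin (n - 1) => fun j : {j : Fin n // j ≠ i} =>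
      (X ^ ((k : ℕ) + 1)) i (j : Fin n)) = fun k => φ (M k) := by
    funext k j
    have : φ (M k) j = M k (e.symm j) := rfl
    rw [this]
    rw [key ((k : ℕ) + 1) (by omega) j]
    simp only [M, Matrix.of_apply, hb, Equiv.apply_symm_apply]
  rw [heq]
  exact hli2
end
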